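/- arXiv:1611.08561 — 3 statements merged into one kernel-verified Lean document; each statement's English description precedes it below -/
import Mathlib

section
/- Let r ≥ 3, s = t/2 ≥ 1 an integer, and n a positive real. Setting a_i = 2n r^i/(r^s + 2Σ_{j=0}^{s-1} r^j) for 0 ≤ i ≤ s-1, a_s = n r^s/(r^s + 2Σ_{j=0}^{s-1} r^j), and p = 0, all the following hold with equality: a_{i-1} r = a_i for 1 ≤ i ≤ s-1; 2a_s = (a_{s-1}+p)(r+1) - a_{s-1}; (r+3)a_0 + (r+2)Σ_{i=1}^{s-1} a_i + a_s + (r+1)p = 3n; and a_0 + ... + a_{s-1} + p = n·2Σ_{j=0}^{s-1} r^j/(r^s + 2Σ_{j=0}^{s-1} r^j). -/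
theorem lp_even_optimal_solution (r s : ℕ) (hr : 3 ≤ r) (hs : 1 ≤ s) (n : ℝ) (hn : 0 < n)
    (a : ℕ → ℝ) (p : ℝ)
    (ha : ∀ i < s, a i = 2 * n * (r : ℝ) ^ i /
      ((r : ℝ) ^ s + 2 * ∑ j ∈ Finset.range s, (r : ℝ) ^ j))
    (has : a s = n * (r : ℝ) ^ s /
      ((r : ℝ) ^ s + 2 * ∑ j ∈ Finset.range s, (r : ℝ) ^ j))
    (hp : p = 0) :
    (∀ i : ℕ, 1 ≤ i → i ≤ s - 1 → a (i - 1) * (r : ℝ) = a i) ∧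
    2 * a s = (a (s - 1) + p) * ((r : ℝ) + 1) - a (s - 1) ∧
    ((r : ℝ) + 3) * a 0 + ((r : ℝ) + 2) * ∑ i ∈ Finset.Icc 1 (s - 1), a i
      + a s + ((r : ℝ) + 1) * p = 3 * n ∧
    ∑ i ∈ Finset.range s, a i + p =
      n * (2 * ∑ j ∈ Finset.range s, (r : ℝ) ^ j) /
        ((r : ℝ) ^ s + 2 * ∑ j ∈ Finset.range s, (r : ℝ) ^ j) := by
  have hr' : (3 : ℝ) ≤ (r : ℝ) := by exact_mod_cast hr
  have hr0 : (0 : ℝ) < (r : ℝ) := by linarith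
  set T : ℝ := ∑ j ∈ Finset.range s, (r : ℝ) ^ j with hT
  have hTpos : 0 < T := by
    apply Finset.sum_pos
    · intro i _; positivity
    · exact Finset.nonempty_range_iff.mpr (by omega)
  have hD : (0 : ℝ) < (r : ℝ) ^ s + 2 * T := by positivity
  have hDne : ((r : ℝ) ^ s + 2 * T) ≠ 0 := ne_of_gt hD
  have hgeo : T * ((r : ℝ) - 1) = (r : ℝ) ^ s - 1 := geom_sum_mul (r : ℝ) s
  have hpow : (r : ℝ) ^ (s - 1) * (r : ℝ) = (r : ℝ) ^ s := by
    rw [← pow_succ]; congr 1; omega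
  have hIcc : ∑ i ∈ Finset.Icc 1 (s - 1), (r : ℝ) ^ i = T - 1 := by
    have h1 : Finset.Icc 1 (s - 1) = Finset.Ico 1 s := by
      rw [← Finset.Ico_add_one_right_eq_Icc]; congr 1; omega
    have h2 : ∑ i ∈ Finset.Ico 0 1, (r : ℝ) ^ i + ∑ i ∈ Finset.Ico 1 s, (r : ℝ) ^ i = T := by
      rw [hT, Finset.range_eq_Ico]
      exact Finset.sum_Ico_consecutive _ (Nat.zero_le 1) hs
    simp at h2
    rw [h1]; linarith
  refine ⟨?_, ?_, ?_, ?_⟩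
  · intro i h1 h2
    rw [ha (i - 1) (by omega), ha i (by omega)]
    have : (r : ℝ) ^ (i - 1) * (r : ℝ) = (r : ℝ) ^ i := by
      rw [← pow_succ]; congr 1; omega
    field_simp
    linear_combination this
  · rw [has, ha (s - 1) (by omega), hp]
    field_simp
    linear_combination (-2) * n * hpow
  · have hsum : ∑ i ∈ Finset.Icc 1 (s - 1), a i
        = 2 * n * (T - 1) / ((r : ℝ) ^ s + 2 * T) := by
      rw [Finset.sum_congr rfl (fun i hi => ha i (by
        simp only [Finset.mem_Icc] at hi; omega))]
      rw [← Finset.sum_div, ← Finset.mul_sum, hIcc]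
    rw [ha 0 (by omega), has, hsum, hp, pow_zero]
    field_simp
    linear_combination 2 * n * hgeo
  · have hsum : ∑ i ∈ Finset.range s, a i = 2 * n * T / ((r : ℝ) ^ s + 2 * T) := by
      rw [Finset.sum_congr rfl (fun i hi => ha i (Finset.mem_range.mp hi))]
      rw [← Finset.sum_div, ← Finset.mul_sum, ← hT]
    rw [hsum, hp]
    ring
end

section
/- Let r ≥ 3, s ≥ 2 integers and m, p nonnegative reals with m ≥ p, and a_0, ..., a_{s-1}, ρ_{s-1} nonnegative reals satisfying ρ_{s-1} + Σ_{i=0}^{s-2} a_i + p = m, a_{s-1} ≤ ρ_{s-1}(r+1), and a_{i-1} r ≥ a_i for 1 ≤ i ≤ s-1. Then a_{s-1} ≤ (m-p)(r+1)/(1 + (r^{s-1}-1)(r+1)/(r^{s-1}(r-1))). -/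
theorem odd_a_bound (r s : ℕ) (hr : 3 ≤ r) (hs : 2 ≤ s)
    (m p : ℝ) (hm : 0 ≤ m) (hp : 0 ≤ p) (hmp : m ≥ p)
    (a : ℕ → ℝ) (ρ : ℝ) (ha : ∀ i ≤ s - 1, 0 ≤ a i) (hρ : 0 ≤ ρ)
    (hsum : ρ + ∑ i ∈ Finset.range (s - 1), a i + p = m)
    (hρa : a (s - 1) ≤ ρ * ((r : ℝ) + 1))
    (hrec : ∀ i : ℕ, 1 ≤ i → i ≤ s - 1 → a (i - 1) * (r : ℝ) ≥ a i) :
    a (s - 1) ≤ (m - p) * ((r : ℝ) + 1) /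
      (1 + ((r : ℝ) ^ (s - 1) - 1) * ((r : ℝ) + 1) / ((r : ℝ) ^ (s - 1) * ((r : ℝ) - 1))) := by
  set t := s - 1 with ht
  have ht1 : 1 ≤ t := by omega
  set rr : ℝ := (r : ℝ) with hrr
  have hr3 : (3 : ℝ) ≤ rr := by rw [hrr]; exact_mod_cast hr
  have hr1 : (1 : ℝ) < rr := by linarith
  have hr0 : (0 : ℝ) < rr := by linarith
  have hrpow : ∀ k : ℕ, (0:ℝ) < rr ^ k := fun k => pow_pos hr0 k
  -- step lemma
  have hstep : ∀ k, k ≤ t → a t ≤ a (t - k) * rr ^ k := by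
    intro k
    induction k with
    | zero => intro _; simp
    | succ n ih =>
      intro hkt
      have hn : n ≤ t := by omega
      have h1 := ih hn
      have h2 := hrec (t - n) (by omega) (by omega)
      have he : t - n - 1 = t - (n + 1) := by omega
      rw [he] at h2
      have : a (t - n) * rr ^ n ≤ (a (t - (n+1)) * rr) * rr ^ n :=
        mul_le_mul_of_nonneg_right h2 (le_of_lt (hrpow n))
      calc a t ≤ a (t - n) * rr ^ n := h1
        _ ≤ (a (t - (n+1)) * rr) * rr ^ n := this
        _ = a (t - (n+1)) * rr ^ (n+1) := by ring
  -- a i ≥ a t / rr^(t-i)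
  have hai : ∀ i, i < t → a t * (1 / rr) ^ (t - i) ≤ a i := by
    intro i hi
    have h := hstep (t - i) (by omega)
    have he : t - (t - i) = i := by omega
    rw [he] at h
    have hp0 : (0:ℝ) < rr ^ (t - i) := hrpow _
    rw [div_pow, one_pow, mul_div_assoc']
    rw [div_le_iff₀ hp0]
    linarith
  -- geometric sum identity
  have geom : ∀ n : ℕ, (∑ i ∈ Finset.range n, (1 / rr) ^ (n - i))
      = (rr ^ n - 1) / (rr ^ n * (rr - 1)) := by
    intro n
    induction n with
    | zero => simp
    | succ k ih =>
      rw [Finset.sum_range_succ]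
      have hc : ∑ i ∈ Finset.range k, (1 / rr) ^ (k + 1 - i)
          = (1/rr) * ∑ i ∈ Finset.range k, (1 / rr) ^ (k - i) := by
        rw [Finset.mul_sum]
        apply Finset.sum_congr rfl
        intro i hi
        have : k + 1 - i = (k - i) + 1 := by
          have := Finset.mem_range.mp hi; omega
        rw [this, pow_succ]; ring
      rw [hc, ih]
      have hk0 : (rr:ℝ)^k ≠ 0 := ne_of_gt (hrpow k)
      have hk1 : (rr:ℝ)^(k+1) ≠ 0 := ne_of_gt (hrpow (k+1))
      have hrne : rr ≠ 0 := ne_of_gt hr0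
      have hrm1 : rr - 1 ≠ 0 := by intro h; nlinarith
      simp only [Nat.succ_sub_one, Nat.add_sub_cancel_left, pow_succ]
      field_simp
      ring
  -- sum lower bound
  have hsumlb : a t * ((rr ^ t - 1) / (rr ^ t * (rr - 1)))
      ≤ ∑ i ∈ Finset.range t, a i := by
    rw [← geom t, Finset.mul_sum]
    apply Finset.sum_le_sum
    intro i hi
    exact hai i (Finset.mem_range.mp hi)
  set S : ℝ := (rr ^ t - 1) / (rr ^ t * (rr - 1)) with hS
  have hS0 : 0 ≤ S := by
    apply div_nonneg
    · have hpt : (1:ℝ) ≤ rr ^ t := by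
        calc (1:ℝ) = 1 ^ t := (one_pow t).symm
          _ ≤ rr ^ t := pow_le_pow_left₀ zero_le_one (le_of_lt hr1) t
      linarith
    · exact le_of_lt (mul_pos (hrpow t) (by linarith))
  have hD : (0:ℝ) < 1 + (rr ^ t - 1) * (rr + 1) / (rr ^ t * (rr - 1)) := by
    have : (rr ^ t - 1) * (rr + 1) / (rr ^ t * (rr - 1)) = S * (rr + 1) := by
      rw [hS]; ring
    rw [this]
    nlinarith
  rw [le_div_iff₀ hD]
  have hDe : (rr ^ t - 1) * (rr + 1) / (rr ^ t * (rr - 1)) = S * (rr + 1) := by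
    rw [hS]; ring
  rw [hDe]
  have hmpe : m - p = ρ + ∑ i ∈ Finset.range t, a i := by linarith
  rw [hmpe]
  have hat0 : 0 ≤ a t := ha t (le_refl t)
  have h1 : a t * (S * (rr + 1)) ≤ (∑ i ∈ Finset.range t, a i) * (rr + 1) := by
    have := mul_le_mul_of_nonneg_right hsumlb (by linarith : (0:ℝ) ≤ rr + 1)
    calc a t * (S * (rr + 1)) = (a t * S) * (rr + 1) := by ring
      _ ≤ _ := this
  have h2 : a t ≤ ρ * (rr + 1) := hρa
  nlinarith
end

section
/- Let r ≥ 3 and t ≥ 4 even. Suppose nonnegative reals m, n, p, a_0, ..., a_{t/2} satisfy: m(r + 2 + r/2) ≥ 3n + p/2 - a_0 + (Σ_{i=0}^{t/2-2} a_i)(r/2); a_{t/2-2-j} ≥ (m - Σ_{i=0}^{t/2-3-j} a_i - p)/(1 + Σ_{i=1}^{j+1} r^i) for 0 ≤ j ≤ t/2-2. Then for every J with 0 ≤ J ≤ t/2-2: m(r + 2 + δ_J) ≥ 3n + p(1/2 + δ_J - r/2) - a_0 + (Σ_{i=0}^{t/2-2-J} a_i)·δ_J, where δ_0 = r/2 and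 δ_{J+1} = δ_J(1 - 1/(1+Σ_{i=1}^{J+1} r^i)). -/
theorem even_induction_step (r t : ℕ) (hr : 3 ≤ r) (ht : 4 ≤ t) (hte : Even t)
    (m n p : ℝ) (a : ℕ → ℝ) (hm : 0 ≤ m) (hn : 0 ≤ n) (hp : 0 ≤ p)
    (ha : ∀ i ≤ t / 2, 0 ≤ a i)
    (δ : ℕ → ℝ) (hδ0 : δ 0 = (r : ℝ) / 2)
    (hδ : ∀ J : ℕ, δ (J + 1) = δ J * (1 - 1 / (1 + ∑ i ∈ Finset.Icc 1 (J + 1), (r : ℝ) ^ i)))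
    (h0 : m * ((r : ℝ) + 2 + (r : ℝ) / 2) ≥
      3 * n + p / 2 - a 0 + (∑ i ∈ Finset.range (t / 2 - 1), a i) * ((r : ℝ) / 2))
    (h1 : ∀ j ≤ t / 2 - 2, a (t / 2 - 2 - j) ≥
      (m - ∑ i ∈ Finset.range (t / 2 - 2 - j), a i - p) /
        (1 + ∑ i ∈ Finset.Icc 1 (j + 1), (r : ℝ) ^ i)) :
    ∀ J ≤ t / 2 - 2, m * ((r : ℝ) + 2 + δ J) ≥
      3 * n + p * (1 / 2 + δ J - (r : ℝ) / 2) - a 0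
        + (∑ i ∈ Finset.range (t / 2 - 1 - J), a i) * δ J := by
  have hr' : (3 : ℝ) ≤ (r : ℝ) := by exact_mod_cast hr
  have hDpos : ∀ J : ℕ, (1 : ℝ) < 1 + ∑ i ∈ Finset.Icc 1 (J + 1), (r : ℝ) ^ i := by
    intro J
    have hsum : (0 : ℝ) < ∑ i ∈ Finset.Icc 1 (J + 1), (r : ℝ) ^ i := by
      apply Finset.sum_pos
      · intro i _; positivity
      · exact ⟨1, by simp⟩
    linarith
  have hδpos : ∀ J : ℕ, 0 < δ J := by
    intro J
    induction J with
    | zero => rw [hδ0]; linarith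
    | succ J ih =>
      rw [hδ J]
      have hD := hDpos J
      have : 1 / (1 + ∑ i ∈ Finset.Icc 1 (J + 1), (r : ℝ) ^ i) < 1 := by
        rw [div_lt_one (by linarith)]; linarith
      have h1' : 0 < 1 - 1 / (1 + ∑ i ∈ Finset.Icc 1 (J + 1), (r : ℝ) ^ i) := by linarith
      positivity
  have ht2 : 2 ≤ t / 2 := by omega
  intro J
  induction J with
  | zero =>
    intro _
    rw [hδ0, Nat.sub_zero]; linarith [h0]
  | succ J ih =>
    intro hJ
    have hJ' : J ≤ t / 2 - 2 := by omega
    have IH := ih hJ'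
    have key := h1 J hJ'
    set D : ℝ := 1 + ∑ i ∈ Finset.Icc 1 (J + 1), (r : ℝ) ^ i with hDdef
    have hD : (1 : ℝ) < D := hDpos J
    have hδJ := hδpos J
    -- index arithmetic
    have hidx1 : t / 2 - 1 - J = (t / 2 - 2 - J) + 1 := by omega
    have hidx2 : t / 2 - 1 - (J + 1) = t / 2 - 2 - J := by omega
    rw [hidx1, Finset.sum_range_succ] at IH
    rw [hidx2, hδ J]
    have mult : a (t / 2 - 2 - J) * δ J ≥
        (m - ∑ i ∈ Finset.range (t / 2 - 2 - J), a i - p) / D * δ J :=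
      mul_le_mul_of_nonneg_right key hδJ.le
    have hDne : D ≠ 0 := by linarith
    have expand : (m - ∑ i ∈ Finset.range (t / 2 - 2 - J), a i - p) / D * δ J
        = (m - ∑ i ∈ Finset.range (t / 2 - 2 - J), a i - p) * (δ J / D) := by ring
    have hrw : δ J * (1 - 1 / D) = δ J - δ J / D := by ring
    rw [hrw]
    nlinarith [IH, mult, expand]
end
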